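/- Let R₀ ⊆ R ⊆ S be rings, let Σ be a set of ring endomorphisms of S with R₀ = {r ∈ R : σ(r) = r for all σ ∈ Σ}, and let a ∈ R₀ be π-regular in R. Then a is π-regular in R₀. -/

import Mathlib

/-- An element `a` is π-regular *in* the subset `T` (of an ambient ring `S`)
if the chains `aT ⊇ a²T ⊇ …` and `Ta ⊇ Ta² ⊇ …` stabilize. -/
def IsPiRegularIn {S : Type*} [Ring S] (T : Set S) (a : S) : Prop :=
  (∃ n : ℕ, ∀ k ≥ n,
      {x : S | ∃ r ∈ T, x = a ^ k * r} = {x : S | ∃ r ∈ T, x = a ^ n * r}) ∧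
  (∃ n : ℕ, ∀ k ≥ n,
      {x : S | ∃ r ∈ T, x = r * a ^ k} = {x : S | ∃ r ∈ T, x = r * a ^ n})

/-!
An element a of a submonoid T of a ring is π-regular in T iff a^n ∈ a^(n+1) T ∩ T a^(n+1) for
some n, iff some power p = a^(n+1) has a group inverse g ∈ T (p g = g p, p g p = p, g p g = g).
Group inverses are unique in any monoid, so each σ ∈ Σ, which sends the group inverse g ∈ R of p
to a group inverse of σ p = p, fixes g. Thus g ∈ R₀, and a is π-regular in R₀.
-/

structure IsGroupInverse {M : Type*} [Monoid M] (p g : M) : Prop where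
  commute : Commute p g
  mul_inv_mul : p * g * p = p
  inv_mul_inv : g * p * g = g

namespace IsGroupInverse

variable {M : Type*} [Monoid M] {p g h : M}

theorem unique (hg : IsGroupInverse p g) (hh : IsGroupInverse p h) : g = h := by
  have hpg : p * g = p * g * (p * h) := by
    calc p * g = g * p := hg.commute.eq
      _ = g * (p * h * p) := by rw [hh.mul_inv_mul]
      _ = g * p * (h * p) := by simp only [mul_assoc]
      _ = p * g * (p * h) := by rw [hg.commute.eq, hh.commute.eq]
  have hph : p * h = p * g * (p * h) := by
    rw [← mul_assoc, hg.mul_inv_mul]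
  calc g = g * (p * g) := by rw [← mul_assoc, hg.inv_mul_inv]
    _ = g * p * h := by rw [hpg, ← hph, mul_assoc]
    _ = h * p * h := by rw [← hg.commute.eq, hpg, ← hph, hh.commute.eq]
    _ = h := hh.inv_mul_inv

theorem map {N F : Type*} [Monoid N] [FunLike F M N] [MonoidHomClass F M N] (f : F)
    (hg : IsGroupInverse p g) : IsGroupInverse (f p) (f g) where
  commute := hg.commute.map f
  mul_inv_mul := by rw [← map_mul, ← map_mul, hg.mul_inv_mul]
  inv_mul_inv := by rw [← map_mul, ← map_mul, hg.inv_mul_inv]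

theorem sq_mul (hg : IsGroupInverse p g) : p ^ 2 * g = p := by
  rw [sq, mul_assoc, hg.commute.eq, ← mul_assoc, hg.mul_inv_mul]

theorem mul_sq (hg : IsGroupInverse p g) : g * p ^ 2 = p := by
  rw [sq, ← mul_assoc, ← hg.commute.eq, hg.mul_inv_mul]

end IsGroupInverse

section Monoid

variable {M : Type*} [Monoid M] {p a b c t : M}

theorem isGroupInverse_mul_mul (hb : p = p ^ 2 * b) (hc : p = c * p ^ 2) :
    IsGroupInverse p (c * p * b) := by
  have hpb : p * b = c * p := by
    calc p * b = c * p ^ 2 * b := by rw [← hc]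
      _ = c * p := by rw [mul_assoc, ← hb]
  have hpcp : p * c * p = p := by rw [mul_assoc, ← hpb, ← mul_assoc, ← sq, ← hb]
  have hpbp : p * b * p = p := by rw [hpb, mul_assoc, ← sq, ← hc]
  refine ⟨?_, ?_, ?_⟩
  · calc p * (c * p * b) = p * c * p * b := by simp only [mul_assoc]
      _ = c * (p * b * p) := by rw [hpcp, hpbp, hpb]
      _ = c * p * b * p := by simp only [mul_assoc]
  · calc p * (c * p * b) * p = p * c * p * (b * p) := by simp only [mul_assoc]
      _ = p := by rw [hpcp, ← mul_assoc, hpbp]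
  · calc c * p * b * p * (c * p * b) = c * (p * b * p) * c * p * b := by simp only [mul_assoc]
      _ = c * (p * c * p) * b := by rw [hpbp]; simp only [mul_assoc]
      _ = c * p * b := by rw [hpcp]

theorem pow_eq_pow_add_mul_pow {n m : ℕ} (h : a ^ n = a ^ (n + 1) * t) (hm : n ≤ m) (j : ℕ) :
    a ^ m = a ^ (m + j) * t ^ j := by
  obtain ⟨i, rfl⟩ := Nat.exists_eq_add_of_le' hm
  induction j with
  | zero => simp
  | succ j ih =>
    calc a ^ (i + n) = a ^ (i + n + j) * t ^ j := ih
      _ = a ^ (i + j) * a ^ n * t ^ j := by rw [← pow_add, Nat.add_right_comm]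
      _ = a ^ (i + n + (j + 1)) * t ^ (j + 1) := by
        rw [h, pow_succ' t, ← mul_assoc, ← mul_assoc, ← pow_add]
        congr 3
        omega

theorem pow_eq_pow_mul_pow_add {n m : ℕ} (h : a ^ n = t * a ^ (n + 1)) (hm : n ≤ m) (j : ℕ) :
    a ^ m = t ^ j * a ^ (m + j) := by
  have h' : MulOpposite.op a ^ n = MulOpposite.op a ^ (n + 1) * MulOpposite.op t := by
    simpa only [MulOpposite.op_pow, MulOpposite.op_mul] using congrArg MulOpposite.op h
  apply MulOpposite.op_injective
  simpa only [MulOpposite.op_pow, MulOpposite.op_mul] using pow_eq_pow_add_mul_pow h' hm j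

variable (T : Submonoid M) {n k : ℕ}

theorem setOf_pow_mul_eq_of_pow_eq (ha : a ∈ T) (ht : t ∈ T) (h : a ^ n = a ^ (n + 1) * t)
    (hk : n ≤ k) : {x | ∃ r ∈ T, x = a ^ k * r} = {x | ∃ r ∈ T, x = a ^ n * r} := by
  ext x
  constructor
  · rintro ⟨r, hr, rfl⟩
    refine ⟨a ^ (k - n) * r, mul_mem (pow_mem ha _) hr, ?_⟩
    rw [← mul_assoc, ← pow_add, Nat.add_sub_cancel' hk]
  · rintro ⟨r, hr, rfl⟩
    refine ⟨t ^ (k - n) * r, mul_mem (pow_mem ht _) hr, ?_⟩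
    rw [pow_eq_pow_add_mul_pow h le_rfl (k - n), Nat.add_sub_cancel' hk, mul_assoc]

theorem setOf_mul_pow_eq_of_pow_eq (ha : a ∈ T) (ht : t ∈ T) (h : a ^ n = t * a ^ (n + 1))
    (hk : n ≤ k) : {x | ∃ r ∈ T, x = r * a ^ k} = {x | ∃ r ∈ T, x = r * a ^ n} := by
  ext x
  constructor
  · rintro ⟨r, hr, rfl⟩
    refine ⟨r * a ^ (k - n), mul_mem hr (pow_mem ha _), ?_⟩
    rw [mul_assoc, ← pow_add, Nat.sub_add_cancel hk]
  · rintro ⟨r, hr, rfl⟩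
    refine ⟨r * t ^ (k - n), mul_mem hr (pow_mem ht _), ?_⟩
    rw [pow_eq_pow_mul_pow_add h le_rfl (k - n), Nat.add_sub_cancel' hk, mul_assoc]

end Monoid

section Ring

variable {S : Type*} [Ring S] {T : Submonoid S} {a : S}

theorem isPiRegularIn_iff_exists_pow_eq (ha : a ∈ T) :
    IsPiRegularIn T a ↔
      ∃ n, (∃ t ∈ T, a ^ n = a ^ (n + 1) * t) ∧ ∃ s ∈ T, a ^ n = s * a ^ (n + 1) := by
  constructor
  · rintro ⟨⟨n₁, h₁⟩, n₂, h₂⟩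
    set n := max n₁ n₂
    have hr : a ^ n ∈ {x | ∃ r ∈ (T : Set S), x = a ^ n * r} := ⟨1, T.one_mem, (mul_one _).symm⟩
    have hl : a ^ n ∈ {x | ∃ r ∈ (T : Set S), x = r * a ^ n} := ⟨1, T.one_mem, (one_mul _).symm⟩
    rw [h₁ n (le_max_left _ _), ← h₁ (n + 1) (by omega)] at hr
    rw [h₂ n (le_max_right _ _), ← h₂ (n + 1) (by omega)] at hl
    exact ⟨n, hr, hl⟩
  · rintro ⟨n, ⟨t, ht, hat⟩, s, hs, has⟩
    exact ⟨⟨n, fun k hk => setOf_pow_mul_eq_of_pow_eq T ha ht hat hk⟩,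
      ⟨n, fun k hk => setOf_mul_pow_eq_of_pow_eq T ha hs has hk⟩⟩

theorem isPiRegularIn_iff_exists_isGroupInverse_pow (ha : a ∈ T) :
    IsPiRegularIn T a ↔ ∃ n, ∃ g ∈ T, IsGroupInverse (a ^ (n + 1)) g := by
  rw [isPiRegularIn_iff_exists_pow_eq ha]
  constructor
  · rintro ⟨n, ⟨t, ht, hat⟩, s, hs, has⟩
    refine ⟨n, s ^ (n + 1) * a ^ (n + 1) * t ^ (n + 1),
      mul_mem (mul_mem (pow_mem hs _) (pow_mem ha _)) (pow_mem ht _),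
      isGroupInverse_mul_mul ?_ ?_⟩
    · rw [sq, ← pow_add]
      exact pow_eq_pow_add_mul_pow hat n.le_succ _
    · rw [sq, ← pow_add]
      exact pow_eq_pow_mul_pow_add has n.le_succ _
  · rintro ⟨n, g, hg, hag⟩
    refine ⟨n + 1, ⟨a ^ n * g, mul_mem (pow_mem ha n) hg, ?_⟩, g * a ^ n,
      mul_mem hg (pow_mem ha n), ?_⟩
    · rw [← mul_assoc, ← pow_add, show n + 1 + 1 + n = (n + 1) * 2 by ring, pow_mul, hag.sq_mul]
    · rw [mul_assoc, ← pow_add, show n + (n + 1 + 1) = (n + 1) * 2 by ring, pow_mul, hag.mul_sq]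

def Subring.semiInvariant (R : Subring S) (E : Set (S →+* S)) : Subring S where
  carrier := {x | x ∈ R ∧ ∀ σ ∈ E, σ x = x}
  mul_mem' := fun ⟨hx, hσx⟩ ⟨hy, hσy⟩ =>
    ⟨R.mul_mem hx hy, fun σ hσ => by rw [map_mul, hσx σ hσ, hσy σ hσ]⟩
  one_mem' := ⟨R.one_mem, fun σ _ => map_one σ⟩
  add_mem' := fun ⟨hx, hσx⟩ ⟨hy, hσy⟩ =>
    ⟨R.add_mem hx hy, fun σ hσ => by rw [map_add, hσx σ hσ, hσy σ hσ]⟩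
  zero_mem' := ⟨R.zero_mem, fun σ _ => map_zero σ⟩
  neg_mem' := fun ⟨hx, hσx⟩ => ⟨R.neg_mem hx, fun σ hσ => by rw [map_neg, hσx σ hσ]⟩

end Ring

theorem piRegular_in_semiInvariant_subring
    {S : Type*} [Ring S] (R : Subring S) (E : Set (S →+* S)) (a : S)
    (haR : a ∈ R) (hfix : ∀ σ ∈ E, σ a = a)
    (h : IsPiRegularIn (R : Set S) a) :
    IsPiRegularIn {x : S | x ∈ R ∧ ∀ σ ∈ E, σ x = x} a := by
  obtain ⟨n, g, hgR, hg⟩ :=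
    (isPiRegularIn_iff_exists_isGroupInverse_pow (T := R.toSubmonoid) haR).mp h
  have hg_fixed : ∀ σ ∈ E, σ g = g := by
    intro σ hσ
    have hσg := hg.map σ
    rw [map_pow, hfix σ hσ] at hσg
    exact hσg.unique hg
  exact (isPiRegularIn_iff_exists_isGroupInverse_pow (T := (R.semiInvariant E).toSubmonoid)
    ⟨haR, hfix⟩).mpr ⟨n, g, ⟨hgR, hg_fixed⟩, hg⟩
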